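/- Let g_n(z) = ∑_{j ∈ J} (a/(R_j(z) - a))^{2n} where a > 0 and the values R_j(z) ∈ ℂ satisfy: Re(R_j(z)) ≤ 0 for all j, and for each integer k ≥ 0 the number of indices j with k·a ≤ |R_j(z)| < (k+1)·a is at most C·(k+1)^t. Then for all n large enough (depending only on C, t), |g_n(z)| ≤ 1 + A/n for a constant A depending only on C and t. -/

import Mathlib

/-!
Write `k_j = ⌊|R_j| / a⌋`. Since `Re R_j ≤ 0`, `|R_j - a|² ≥ |R_j|² + a² ≥ (k_j² + 1) a²`, so the
`j`-th term has modulus at most `(k_j² + 1)⁻ⁿ`. The shell `k = 0` holds at most one index and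
contributes at most `1`; the shell `k ≥ 1` holds at most `C (k + 1)ᵗ` indices, and once `n > t`
its contribution is at most `C 2ᵗ⁺¹ 2⁻ⁿ / k²`. Summing over `k ≥ 1` gives `C 2ᵗ⁺² 2⁻ⁿ ≤ C 2ᵗ⁺² / n`.
-/

open Finset

theorem Complex.norm_sq_add_sq_le_norm_sub_ofReal_sq {z : ℂ} (hz : z.re ≤ 0) {a : ℝ}
    (ha : 0 ≤ a) : ‖z‖ ^ 2 + a ^ 2 ≤ ‖z - a‖ ^ 2 := by
  simp only [Complex.sq_norm, Complex.normSq_apply, Complex.sub_re, Complex.sub_im,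
    Complex.ofReal_re, Complex.ofReal_im]
  nlinarith

theorem norm_div_sub_pow_two_mul_le {a : ℝ} (ha : 0 < a) {z : ℂ} (hz : z.re ≤ 0) {k : ℝ}
    (hk : 0 ≤ k) (hka : k * a ≤ ‖z‖) (n : ℕ) :
    ‖((a : ℂ) / (z - a)) ^ (2 * n)‖ ≤ ((k ^ 2 + 1)⁻¹) ^ n := by
  have hdist : (k ^ 2 + 1) * a ^ 2 ≤ ‖z - a‖ ^ 2 := by
    nlinarith [Complex.norm_sq_add_sq_le_norm_sub_ofReal_sq hz ha.le,
      mul_le_mul hka hka (by positivity) (norm_nonneg z)]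
  have hratio : a ^ 2 / ‖z - a‖ ^ 2 ≤ (k ^ 2 + 1)⁻¹ := by
    have hpos : 0 < ‖z - a‖ ^ 2 := lt_of_lt_of_le (by positivity) hdist
    rw [div_le_iff₀ hpos, inv_mul_eq_div, le_div_iff₀ (by positivity)]
    linarith
  rw [pow_mul, norm_pow, norm_pow, norm_div, Complex.norm_real, Real.norm_of_nonneg ha.le,
    div_pow]
  gcongr

theorem add_one_pow_mul_inv_sq_add_one_pow_le {k : ℝ} (hk : 1 ≤ k) {t n : ℕ} (htn : t + 1 ≤ n) :
    (k + 1) ^ t * ((k ^ 2 + 1)⁻¹) ^ n ≤ 2 ^ (t + 1) / 2 ^ n / k ^ 2 := by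
  obtain ⟨m, rfl⟩ := Nat.exists_eq_add_of_le htn
  have key : (k + 1) ^ t * (2 ^ m * k ^ 2) ≤ (k ^ 2 + 1) ^ t * ((k ^ 2 + 1) ^ m * (k ^ 2 + 1)) := by
    gcongr <;> nlinarith
  rw [inv_pow, ← div_eq_mul_inv, div_div, div_le_div_iff₀ (by positivity) (by positivity)]
  calc (k + 1) ^ t * (2 ^ (t + 1 + m) * k ^ 2)
      = 2 ^ (t + 1) * ((k + 1) ^ t * (2 ^ m * k ^ 2)) := by ring
    _ ≤ 2 ^ (t + 1) * ((k ^ 2 + 1) ^ t * ((k ^ 2 + 1) ^ m * (k ^ 2 + 1))) := by grw [key]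
    _ = 2 ^ (t + 1) * (k ^ 2 + 1) ^ (t + 1 + m) := by ring

theorem floor_div_mul_le_and_lt {a r : ℝ} (ha : 0 < a) (hr : 0 ≤ r) :
    (⌊r / a⌋₊ : ℝ) * a ≤ r ∧ r < ((⌊r / a⌋₊ : ℝ) + 1) * a :=
  ⟨(le_div_iff₀ ha).mp (Nat.floor_le (by positivity)), (div_lt_iff₀ ha).mp (Nat.lt_floor_add_one _)⟩

theorem card_filter_floor_div_eq_le {J : Type*} {a : ℝ} (ha : 0 < a) {r : J → ℝ} (hr : 0 ≤ r)
    {t : ℕ} {C : ℝ} (hcount : ∀ k : ℕ, ∃ s : Finset J,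
      (∀ j, (k : ℝ) * a ≤ r j ∧ r j < ((k : ℝ) + 1) * a → j ∈ s) ∧ (#s : ℝ) ≤ C * ((k : ℝ) + 1) ^ t)
    (hone : ∀ j₁ j₂, r j₁ < a → r j₂ < a → j₁ = j₂) (F : Finset J) (k : ℕ) :
    (#{j ∈ F | ⌊r j / a⌋₊ = k} : ℝ) ≤ if k = 0 then 1 else C * ((k : ℝ) + 1) ^ t := by
  have hshell (j : J) := floor_div_mul_le_and_lt ha (hr j)
  split_ifs with hk
  · have hsmall (j : J) (hj : j ∈ F.filter (⌊r · / a⌋₊ = k)) : r j < a := by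
      obtain ⟨-, hjk⟩ := mem_filter.mp hj
      simpa [hjk, hk] using (hshell j).2
    exact_mod_cast card_le_one.mpr fun j₁ h₁ j₂ h₂ => hone j₁ j₂ (hsmall j₁ h₁) (hsmall j₂ h₂)
  · obtain ⟨s, hs, hsC⟩ := hcount k
    refine le_trans (Nat.cast_le.mpr (card_le_card fun j hj => hs j ?_)) hsC
    obtain ⟨-, rfl⟩ := mem_filter.mp hj
    exact hshell j

theorem Finset.sum_le_sum_image_mul_of_card_fiber_le {ι κ : Type*} [DecidableEq κ]
    (F : Finset ι) (f : ι → ℝ) (g : ι → κ) (c d : κ → ℝ) (hd : 0 ≤ d)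
    (hcard : ∀ k, (#{i ∈ F | g i = k} : ℝ) ≤ c k) (hf : ∀ i ∈ F, f i ≤ d (g i)) :
    ∑ i ∈ F, f i ≤ ∑ k ∈ F.image g, c k * d k := by
  rw [← sum_fiberwise_of_maps_to fun i hi => mem_image_of_mem g hi]
  gcongr with k
  calc ∑ i ∈ F with g i = k, f i ≤ ∑ i ∈ F with g i = k, d k := by
        refine sum_le_sum fun i hi => ?_
        obtain ⟨hiF, rfl⟩ := mem_filter.mp hi
        exact hf i hiF
    _ = #{i ∈ F | g i = k} * d k := by rw [sum_const, nsmul_eq_mul]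
    _ ≤ c k * d k := mul_le_mul_of_nonneg_right (hcard k) (hd k)

theorem Finset.sum_le_one_add_two_mul_of_le_div_sq (S : Finset ℕ) {h : ℕ → ℝ} {c : ℝ}
    (hc : 0 ≤ c) (hh : 0 ≤ h) (h0 : h 0 ≤ 1) (hk : ∀ k, 0 < k → h k ≤ c / k ^ 2) :
    ∑ k ∈ S, h k ≤ 1 + 2 * c := by
  set N := S.sup id + 1
  have hS : S ⊆ insert 0 (Ioo 0 N) := fun k hk => by
    have : k < N := Nat.lt_succ_of_le (le_sup (f := id) hk)
    rcases k.eq_zero_or_pos with rfl | hpos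
    · exact mem_insert_self _ _
    · exact mem_insert_of_mem (mem_Ioo.mpr ⟨hpos, this⟩)
  calc ∑ k ∈ S, h k ≤ ∑ k ∈ insert 0 (Ioo 0 N), h k :=
        sum_le_sum_of_subset_of_nonneg hS fun k _ _ => hh k
    _ = h 0 + ∑ k ∈ Ioo 0 N, h k := sum_insert (by simp)
    _ ≤ 1 + ∑ k ∈ Ioo 0 N, c * ((k : ℝ) ^ 2)⁻¹ := by
        gcongr with k hk'
        exact (hk k (mem_Ioo.mp hk').1).trans_eq (div_eq_mul_inv _ _)
    _ ≤ 1 + 2 * c := by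
        rw [← mul_sum, mul_comm]
        gcongr
        simpa using sum_Ioo_inv_sq_le (α := ℝ) 0 N

theorem norm_tsum_le_of_sum_norm_le {ι E : Type*} [NormedAddCommGroup E] [CompleteSpace E]
    {f : ι → E} {B : ℝ} (hB : ∀ F : Finset ι, ∑ i ∈ F, ‖f i‖ ≤ B) : ‖∑' i, f i‖ ≤ B := by
  have hf : Summable fun i => ‖f i‖ := summable_of_sum_le (fun i => norm_nonneg _) hB
  exact (norm_tsum_le_tsum_norm hf).trans (hf.tsum_le_of_sum_le hB)

theorem g_n_bound_general (J : Type*) (a : ℝ) (ha : 0 < a)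
    (R : J → ℂ) (hre : ∀ j, (R j).re ≤ 0)
    (t : ℕ) (C : ℝ) (hC : 0 < C)
    (hcount : ∀ k : ℕ, ∃ s : Finset J,
      (∀ j : J, (k : ℝ) * a ≤ ‖R j‖ ∧ ‖R j‖ < ((k : ℝ) + 1) * a →
        j ∈ s) ∧ (s.card : ℝ) ≤ C * ((k : ℝ) + 1) ^ t)
    (hone : ∀ j₁ j₂ : J, ‖R j₁‖ < a → ‖R j₂‖ < a → j₁ = j₂) :
    ∃ A : ℝ, 0 < A ∧ ∃ N : ℕ, ∀ n : ℕ, N ≤ n →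
      ‖∑' j : J, ((a : ℂ) / (R j - a)) ^ (2 * n)‖ ≤ 1 + A / n := by
  refine ⟨C * 2 ^ (t + 2), by positivity, t + 1, fun n hn => norm_tsum_le_of_sum_norm_le fun F => ?_⟩
  let κ (j : J) : ℕ := ⌊‖R j‖ / a⌋₊
  have hn0 : (0 : ℝ) < n := Nat.cast_pos.mpr (Nat.succ_pos t |>.trans_le hn)
  calc ∑ j ∈ F, ‖((a : ℂ) / (R j - a)) ^ (2 * n)‖
      ≤ ∑ k ∈ F.image κ, (if k = 0 then 1 else C * ((k : ℝ) + 1) ^ t) * (((k : ℝ) ^ 2 + 1)⁻¹) ^ n :=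
        sum_le_sum_image_mul_of_card_fiber_le F _ κ _ _ (fun k => by positivity)
          (card_filter_floor_div_eq_le ha (fun j => norm_nonneg _) hcount hone F)
          fun j _ => norm_div_sub_pow_two_mul_le ha (hre j) (Nat.cast_nonneg _)
            (floor_div_mul_le_and_lt ha (norm_nonneg _)).1 n
    _ ≤ 1 + 2 * (C * 2 ^ (t + 1) / 2 ^ n) := by
        refine sum_le_one_add_two_mul_of_le_div_sq _ (by positivity)
          (fun k => by dsimp only; split_ifs <;> positivity) (by simp) fun k hk => ?_
        calc _ = C * (((k : ℝ) + 1) ^ t * (((k : ℝ) ^ 2 + 1)⁻¹) ^ n) := by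
              rw [if_neg hk.ne', mul_assoc]
          _ ≤ C * (2 ^ (t + 1) / 2 ^ n / (k : ℝ) ^ 2) := by
              gcongr
              exact add_one_pow_mul_inv_sq_add_one_pow_le (Nat.one_le_cast.mpr hk) hn
          _ = C * 2 ^ (t + 1) / 2 ^ n / (k : ℝ) ^ 2 := by ring
    _ = 1 + C * 2 ^ (t + 2) / 2 ^ n := by ring
    _ ≤ 1 + C * 2 ^ (t + 2) / n := by
        gcongr
        exact_mod_cast n.lt_two_pow_self.le

theorem g_n_bound (J : Type*) [Countable J] (a : ℝ) (ha : 0 < a)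
    (R : J → ℂ) (hre : ∀ j, (R j).re ≤ 0)
    (t : ℕ) (ht : 0 < t) (C : ℝ) (hC : 0 < C)
    (hcount : ∀ k : ℕ, ∃ s : Finset J,
      (∀ j : J, (k : ℝ) * a ≤ ‖R j‖ ∧ ‖R j‖ < ((k : ℝ) + 1) * a →
        j ∈ s) ∧ (s.card : ℝ) ≤ C * ((k : ℝ) + 1) ^ t)
    (hone : ∀ j₁ j₂ : J, ‖R j₁‖ < a → ‖R j₂‖ < a → j₁ = j₂) :
    ∃ A : ℝ, 0 < A ∧ ∃ N : ℕ, ∀ n : ℕ, N ≤ n →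
      ‖∑' j : J, ((a : ℂ) / (R j - a)) ^ (2 * n)‖ ≤ 1 + A / n :=
  g_n_bound_general J a ha R hre t C hC hcount hone
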